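/- arXiv:1202.0766 — 2 statements merged into one kernel-verified Lean document; each statement's English description precedes it below -/
import Mathlib

section
/- Let f : ℝ → ℝ be defined by f(t) = e^{-1/t} for t > 0 and f(t) = 0 for t ≤ 0. For every positive integer i, the i-th derivative of f satisfies: f^{(i)}(t) = e^{-1/t} t^{-2i} Σ_{k=0}^{i-1} (-1)^k a_{i,k} t^k for t > 0, and f^{(i)}(t) = 0 for t ≤ 0, where a_{i,k} = C(i,k) · C(i-1,k) · k!. -/
/-!
For `t > 0` write `f⁽ⁱ⁾(t) = e^{-1/t} t^{-2i} Pᵢ(t)`. Differentiating gives the recursion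
`Pᵢ₊₁ = Pᵢ - t (2i Pᵢ - t Pᵢ')`, which on coefficients is the identity
`a_{i+1,k+1} = a_{i,k+1} + (2i - k) a_{i,k}`; this follows from Pascal's rule and the absorption
identities for binomial coefficients. For `t ≤ 0`, `f` vanishes on `(-∞, 0)` and `f⁽ⁱ⁾` is
continuous since `f` is smooth, so `f⁽ⁱ⁾` vanishes on the closure `(-∞, 0]`.
-/

open Polynomial Finset Set Filter Topology
open scoped Nat

theorem Polynomial.coeff_X_mul_derivative {R : Type*} [Semiring R] (p : R[X]) (n : ℕ) :
    (X * derivative p).coeff n = p.coeff n * n := by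
  cases n <;> simp [coeff_derivative]

theorem Nat.cast_choose_succ_right_mul (n k : ℕ) (hk : k ≤ n) :
    (n.choose (k + 1) : ℝ) * (k + 1) = n.choose k * (n - k) := by
  rw [← Nat.cast_sub hk]
  exact_mod_cast Nat.choose_succ_right_eq n k

theorem iteratedDeriv_eq_zero_of_eqOn_Iio {E : Type*} [NormedAddCommGroup E] [NormedSpace ℝ E]
    {f : ℝ → E} {a x : ℝ} {n : ℕ} (hf : ContDiff ℝ n f) (h : EqOn f 0 (Iio a)) (hx : x ≤ a) :
    iteratedDeriv n f x = 0 := by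
  have hIio : Iio a ⊆ {y | iteratedDeriv n f y = 0} := fun y hy => by
    simpa using h.iteratedDeriv_of_isOpen isOpen_Iio n hy
  have hclosed : IsClosed {y | iteratedDeriv n f y = 0} :=
    isClosed_eq (hf.continuous_iteratedDeriv' n) continuous_const
  exact hclosed.closure_subset_iff.2 hIio (by rwa [closure_Iio])

theorem hasDerivAt_exp_neg_one_div_div_pow_mul_eval (m : ℕ) (p : ℝ[X]) {t : ℝ} (ht : t ≠ 0) :
    HasDerivAt (fun x => Real.exp (-1 / x) / x ^ m * p.eval x)
      (Real.exp (-1 / t) / t ^ (m + 2) * (p - X * (C (m : ℝ) * p - X * derivative p)).eval t) t := by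
  have hinv : HasDerivAt (fun x : ℝ => -1 / x) (1 / t ^ 2) t := by
    simpa [neg_div, one_div] using (hasDerivAt_inv ht).fun_neg
  refine ((hinv.exp.fun_div (hasDerivAt_pow m t) (pow_ne_zero m ht)).fun_mul
    (p.hasDerivAt t)).congr_deriv ?_
  rcases m with _ | k <;>
  · simp only [eval_sub, eval_mul, eval_X, eval_C, pow_zero, Nat.add_sub_cancel]
    field_simp
    ring

noncomputable def expNegInvNumerator : ℕ → ℝ[X]
  | 0 => 1
  | i + 1 => expNegInvNumerator i -
      X * (C (2 * i : ℝ) * expNegInvNumerator i - X * derivative (expNegInvNumerator i))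

theorem iteratedDeriv_expNegInvGlue_of_pos (i : ℕ) {t : ℝ} (ht : 0 < t) :
    iteratedDeriv i expNegInvGlue t =
      Real.exp (-1 / t) / t ^ (2 * i) * (expNegInvNumerator i).eval t := by
  induction i generalizing t with
  | zero => simp [expNegInvGlue, expNegInvNumerator, ht.not_ge, neg_div]
  | succ i ih =>
    have hloc : iteratedDeriv i expNegInvGlue =ᶠ[𝓝 t]
        fun x => Real.exp (-1 / x) / x ^ (2 * i) * (expNegInvNumerator i).eval x :=
      eventually_of_mem (Ioi_mem_nhds ht) fun x hx => ih hx
    rw [iteratedDeriv_succ, hloc.deriv_eq,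
      (hasDerivAt_exp_neg_one_div_div_pow_mul_eval (2 * i) _ ht.ne').deriv, expNegInvNumerator]
    push_cast
    ring

/-- `expNegInvCoeff i k` is the unsigned Lah number `L(i, i - k)`. -/
def expNegInvCoeff (i k : ℕ) : ℕ := i.choose k * (i - 1).choose k * k !

theorem expNegInvCoeff_of_lt {j k : ℕ} (h : j < k) : expNegInvCoeff (j + 1) k = 0 := by
  simp [expNegInvCoeff, Nat.choose_eq_zero_of_lt h]

theorem expNegInvCoeff_succ_succ (j k : ℕ) :
    (expNegInvCoeff (j + 2) (k + 1) : ℝ) =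
      expNegInvCoeff (j + 1) (k + 1) + (2 * j + 2 - k) * expNegInvCoeff (j + 1) k := by
  rcases lt_or_ge j k with hjk | hkj
  · rw [expNegInvCoeff_of_lt hjk, expNegInvCoeff_of_lt (by omega : j < k + 1),
      expNegInvCoeff_of_lt (by omega : j + 1 < k + 1)]
    simp
  have pascal : ((j + 2).choose (k + 1) : ℝ) = (j + 1).choose k + (j + 1).choose (k + 1) := by
    exact_mod_cast Nat.choose_succ_succ (j + 1) k
  have absorb : ((j + 1).choose (k + 1) : ℝ) * (k + 1) = (j + 1) * j.choose k := by
    exact_mod_cast (Nat.add_one_mul_choose_eq j k).symm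
  have shift₁ := Nat.cast_choose_succ_right_mul (j + 1) k (by omega)
  have shift₀ := Nat.cast_choose_succ_right_mul j k hkj
  simp only [expNegInvCoeff, Nat.add_sub_cancel, Nat.factorial_succ]
  push_cast at shift₁ ⊢
  linear_combination (k ! * (j + 1).choose (k + 1) * (k + 1) : ℝ) * pascal
    + (k ! * ((j + 1).choose k + (j + 1).choose (k + 1)) : ℝ) * absorb
    - (k ! * (j + 1).choose (k + 1) : ℝ) * shift₀ + (k ! * j.choose k : ℝ) * shift₁

theorem coeff_expNegInvNumerator (j k : ℕ) :
    (expNegInvNumerator (j + 1)).coeff k = (-1) ^ k * expNegInvCoeff (j + 1) k := by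
  induction j generalizing k with
  | zero => rcases k with _ | _ | k <;> simp [expNegInvNumerator, expNegInvCoeff, coeff_one]
  | succ j ih =>
    rcases k with _ | k
    · rw [expNegInvNumerator]
      simp [ih, expNegInvCoeff]
    · rw [expNegInvNumerator, coeff_sub, coeff_X_mul, coeff_sub, coeff_C_mul,
        coeff_X_mul_derivative, ih, ih, expNegInvCoeff_succ_succ]
      push_cast
      ring

theorem eval_expNegInvNumerator (j : ℕ) (t : ℝ) :
    (expNegInvNumerator (j + 1)).eval t =
      ∑ k ∈ range (j + 1), (-1) ^ k * (expNegInvCoeff (j + 1) k : ℝ) * t ^ k := by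
  have hdeg : (expNegInvNumerator (j + 1)).natDegree < j + 1 := by
    rw [Nat.lt_succ_iff, natDegree_le_iff_coeff_eq_zero]
    intro k hk
    rw [coeff_expNegInvNumerator, expNegInvCoeff_of_lt (by exact_mod_cast hk)]
    simp
  simp [eval_eq_sum_range' hdeg, coeff_expNegInvNumerator]

/-- Let `f(t) = exp (-1/t)` for `t > 0` and `f(t) = 0` for `t ≤ 0`.
For every positive integer `i`, the `i`-th derivative of `f` equals
`exp (-1/t) / t^(2i) * ∑_{k=0}^{i-1} (-1)^k a_{i,k} t^k` for `t > 0`, and `0` for `t ≤ 0`,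
where `a_{i,k} = C(i,k) * C(i-1,k) * k!`. -/
theorem iteratedDeriv_partition_unity_function (i : ℕ) (hi : 1 ≤ i) :
    (∀ t : ℝ, 0 < t →
      iteratedDeriv i (fun x : ℝ => if 0 < x then Real.exp (-1 / x) else 0) t =
        Real.exp (-1 / t) / t ^ (2 * i) *
          ∑ k ∈ Finset.range i,
            (-1 : ℝ) ^ k *
              ((Nat.choose i k : ℝ) * (Nat.choose (i - 1) k : ℝ) * (Nat.factorial k : ℝ)) * t ^ k) ∧
    (∀ t : ℝ, t ≤ 0 →
      iteratedDeriv i (fun x : ℝ => if 0 < x then Real.exp (-1 / x) else 0) t = 0) := by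
  have hglue : (fun x : ℝ => if 0 < x then Real.exp (-1 / x) else 0) = expNegInvGlue := by
    funext x
    by_cases hx : 0 < x <;> simp [expNegInvGlue, hx, neg_div]
  obtain ⟨j, rfl⟩ := Nat.exists_eq_add_of_le' hi
  rw [hglue]
  refine ⟨fun t ht => ?_, fun t ht => ?_⟩
  · rw [iteratedDeriv_expNegInvGlue_of_pos _ ht, eval_expNegInvNumerator]
    simp [expNegInvCoeff]
  · exact iteratedDeriv_eq_zero_of_eqOn_Iio expNegInvGlue.contDiff
      (fun x hx => expNegInvGlue.zero_of_nonpos hx.le) ht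
end

section
/- For every positive integer i and every t > 0, the i-th derivative of h(t) = e^{1/t} satisfies the strict inequality (-1)^i h^{(i)}(t) > 0. -/
/-!
Differentiating `p(1/t) e^{1/t}` gives `-q(1/t) e^{1/t}` with `q = X² (p + p')`, so
`h⁽ⁿ⁾(t) = (-1)ⁿ Pₙ(1/t) e^{1/t}` for the polynomials `P₀ = 1`, `Pₙ₊₁ = X² (Pₙ + Pₙ')`.
The recursion preserves nonnegativity of coefficients, and it keeps `Pₙ` positive on
`(0, ∞)` since `Pₙ'` is nonnegative there.
-/

open Polynomial Real

noncomputable def expOneDivPoly : ℕ → ℝ[X]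
  | 0 => 1
  | n + 1 => X ^ 2 * (expOneDivPoly n + derivative (expOneDivPoly n))

theorem Polynomial.eval_nonneg_of_coeff_nonneg {p : ℝ[X]} (hp : ∀ k, 0 ≤ p.coeff k) {x : ℝ}
    (hx : 0 ≤ x) : 0 ≤ p.eval x := by
  rw [eval_eq_sum_range]
  exact Finset.sum_nonneg fun k _ => mul_nonneg (hp k) (pow_nonneg hx k)

theorem Polynomial.coeff_derivative_nonneg {p : ℝ[X]} (hp : ∀ k, 0 ≤ p.coeff k) (k : ℕ) :
    0 ≤ (derivative p).coeff k := by
  rw [coeff_derivative]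
  exact mul_nonneg (hp (k + 1)) (by positivity)

theorem expOneDivPoly_coeff_nonneg (n k : ℕ) : 0 ≤ (expOneDivPoly n).coeff k := by
  induction n generalizing k with
  | zero =>
    rw [expOneDivPoly, coeff_one]
    split_ifs <;> norm_num
  | succ n ih =>
    rw [expOneDivPoly, coeff_X_pow_mul']
    split_ifs
    · rw [coeff_add]
      exact add_nonneg (ih _) (coeff_derivative_nonneg ih _)
    · exact le_rfl

theorem expOneDivPoly_eval_pos (n : ℕ) {x : ℝ} (hx : 0 < x) :
    0 < (expOneDivPoly n).eval x := by
  induction n with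
  | zero => simp [expOneDivPoly]
  | succ n ih =>
    have hderiv : 0 ≤ (derivative (expOneDivPoly n)).eval x :=
      eval_nonneg_of_coeff_nonneg (coeff_derivative_nonneg (expOneDivPoly_coeff_nonneg n)) hx.le
    rw [expOneDivPoly, eval_mul, eval_pow, eval_X, eval_add]
    positivity

theorem hasDerivAt_eval_one_div_mul_exp_one_div (p : ℝ[X]) {t : ℝ} (ht : t ≠ 0) :
    HasDerivAt (fun s => p.eval (1 / s) * exp (1 / s))
      (-((X ^ 2 * (p + derivative p)).eval (1 / t) * exp (1 / t))) t := by
  have hinv : HasDerivAt (fun s : ℝ => 1 / s) (-(1 / t ^ 2)) t := by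
    simpa only [one_div] using hasDerivAt_inv ht
  refine (((p.hasDerivAt (1 / t)).comp t hinv).mul
    ((hasDerivAt_exp (1 / t)).comp t hinv)).congr_deriv ?_
  simp only [Function.comp_apply, eval_mul, eval_pow, eval_X, eval_add]
  field_simp
  ring

theorem iteratedDeriv_exp_one_div (n : ℕ) {t : ℝ} (ht : t ≠ 0) :
    iteratedDeriv n (fun x => exp (1 / x)) t
      = (-1) ^ n * ((expOneDivPoly n).eval (1 / t) * exp (1 / t)) := by
  induction n generalizing t with
  | zero => simp [expOneDivPoly]
  | succ n ih =>
    have hnear : iteratedDeriv n (fun x => exp (1 / x))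
        =ᶠ[nhds t] fun s => (-1) ^ n * ((expOneDivPoly n).eval (1 / s) * exp (1 / s)) := by
      filter_upwards [isOpen_ne.mem_nhds ht] with s hs using ih hs
    rw [iteratedDeriv_succ, hnear.deriv_eq,
      ((hasDerivAt_eval_one_div_mul_exp_one_div _ ht).const_mul _).deriv, expOneDivPoly]
    ring

theorem exp_one_div_iteratedDeriv_pos_general (i : ℕ) (t : ℝ) (ht : 0 < t) :
    0 < (-1 : ℝ) ^ i * iteratedDeriv i (fun x : ℝ => Real.exp (1 / x)) t := by
  rw [iteratedDeriv_exp_one_div i ht.ne', ← mul_assoc, ← mul_pow, neg_one_mul, neg_neg, one_pow,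
    one_mul]
  exact mul_pos (expOneDivPoly_eval_pos i (by positivity)) (exp_pos _)

/-- For every positive integer `i` and every `t > 0`,
`(-1)^i h^(i)(t) > 0` where `h(t) = exp (1/t)`. -/
theorem exp_one_div_iteratedDeriv_pos (i : ℕ) (hi : 1 ≤ i) (t : ℝ) (ht : 0 < t) :
    0 < (-1 : ℝ) ^ i * iteratedDeriv i (fun x : ℝ => Real.exp (1 / x)) t :=
  exp_one_div_iteratedDeriv_pos_general i t ht
end
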